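/- arXiv:2110.08490 — 2 statements merged into one kernel-verified Lean document; each statement's English description precedes it below -/
import Mathlib

section
/- Let K be a proper nonempty subset of {1,…,N}, ε > 0, and x ∈ (ℝ²)^N satisfy R_K(x) ≤ 2ε and R_{K∪{j}}(x) ≥ 21ε for every j ∉ K. Then ‖x^i − x^j‖² ≥ ε for all i ∈ K and all j ∉ K. -/
open Finset

/-- The dispersion `R_L(x)` of the points `x^i`, `i ∈ L`, around their barycenter
`S_L(x) = (1/|L|) ∑_{i∈L} x^i`. -/
noncomputable def RK {N : ℕ} (L : Finset (Fin N)) (x : Fin N → EuclideanSpace ℝ (Fin 2)) : ℝ :=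
  ∑ i ∈ L, ‖x i - (L.card : ℝ)⁻¹ • ∑ j ∈ L, x j‖ ^ 2

/-!
Adding `x^j` to `K` raises the dispersion by at most `‖x^j - S_K‖²`, because the barycenter
minimizes the sum of squared distances. Hence `‖x^j - S_K‖² ≥ 19ε`, while `‖x^i - S_K‖² ≤ 2ε`
for `i ∈ K`, and the triangle inequality gives
`‖x^i - x^j‖ ≥ (√19 - √2)√ε ≥ √ε`.
-/

theorem sum_sub_barycenter_eq_zero {ι E : Type*} [AddCommGroup E] [Module ℝ E] (s : Finset ι)
    (x : ι → E) :
    ∑ i ∈ s, (x i - (s.card : ℝ)⁻¹ • ∑ j ∈ s, x j) = 0 := by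
  rcases s.eq_empty_or_nonempty with rfl | hs
  · simp
  have hcard : (s.card : ℝ) ≠ 0 := by exact_mod_cast hs.card_pos.ne'
  rw [sum_sub_distrib, sum_const, ← Nat.cast_smul_eq_nsmul ℝ, smul_smul, mul_inv_cancel₀ hcard,
    one_smul, sub_self]

section Barycenter

variable {ι E : Type*} [NormedAddCommGroup E] [InnerProductSpace ℝ E] (s : Finset ι) (x : ι → E)

/-- Parallel axis theorem (König–Huygens). -/
theorem sum_norm_sub_sq_eq_sum_norm_sub_barycenter_sq_add (c : E) :
    ∑ i ∈ s, ‖x i - c‖ ^ 2 = ∑ i ∈ s, ‖x i - (s.card : ℝ)⁻¹ • ∑ j ∈ s, x j‖ ^ 2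
      + s.card * ‖(s.card : ℝ)⁻¹ • ∑ j ∈ s, x j - c‖ ^ 2 := by
  set m := (s.card : ℝ)⁻¹ • ∑ j ∈ s, x j
  have hcross : ∑ i ∈ s, 2 * inner ℝ (x i - m) (m - c) = 0 := by
    rw [← mul_sum, ← sum_inner, sum_sub_barycenter_eq_zero, inner_zero_left, mul_zero]
  rw [← nsmul_eq_mul, ← sum_const, ← add_zero (∑ i ∈ s, ‖x i - m‖ ^ 2), ← hcross,
    ← sum_add_distrib, ← sum_add_distrib]
  refine sum_congr rfl fun i _ => ?_
  rw [← norm_add_sq_real, sub_add_sub_cancel]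

theorem sum_norm_sub_barycenter_sq_le (c : E) :
    ∑ i ∈ s, ‖x i - (s.card : ℝ)⁻¹ • ∑ j ∈ s, x j‖ ^ 2 ≤ ∑ i ∈ s, ‖x i - c‖ ^ 2 := by
  rw [sum_norm_sub_sq_eq_sum_norm_sub_barycenter_sq_add s x c]
  exact le_add_of_nonneg_right (by positivity)

end Barycenter

theorem RK_insert_le {N : ℕ} (K : Finset (Fin N)) (x : Fin N → EuclideanSpace ℝ (Fin 2))
    {j : Fin N} (hj : j ∉ K) :
    RK (insert j K) x ≤ RK K x + ‖x j - (K.card : ℝ)⁻¹ • ∑ k ∈ K, x k‖ ^ 2 := by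
  calc RK (insert j K) x ≤ ∑ i ∈ insert j K, ‖x i - (K.card : ℝ)⁻¹ • ∑ k ∈ K, x k‖ ^ 2 :=
        sum_norm_sub_barycenter_sq_le _ x _
    _ = RK K x + ‖x j - (K.card : ℝ)⁻¹ • ∑ k ∈ K, x k‖ ^ 2 := by
        rw [sum_insert hj, add_comm]; rfl

theorem le_norm_sub_sq_of_norm_sq_le_of_le_norm_sq {E : Type*} [SeminormedAddCommGroup E]
    {u v : E} {ε : ℝ} (hu : ‖u‖ ^ 2 ≤ 2 * ε) (hv : 19 * ε ≤ ‖v‖ ^ 2) : ε ≤ ‖u - v‖ ^ 2 := by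
  have hgap : ‖v‖ - ‖u‖ ≤ ‖u - v‖ := by
    simpa [norm_sub_rev] using norm_sub_norm_le v u
  have hε : 0 ≤ ε := by nlinarith [sq_nonneg ‖u‖]
  have huv : ‖u‖ ≤ ‖v‖ :=
    (pow_le_pow_iff_left₀ (norm_nonneg u) (norm_nonneg v) two_ne_zero).1 (by linarith)
  calc ε ≤ (‖v‖ - ‖u‖) ^ 2 := by nlinarith [sq_nonneg (‖v‖ - 3 * ‖u‖)]
    _ ≤ ‖u - v‖ ^ 2 := pow_le_pow_left₀ (sub_nonneg.2 huv) hgap 2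

theorem stmt_2_general (N : ℕ) (K : Finset (Fin N))
    (ε : ℝ) (x : Fin N → EuclideanSpace ℝ (Fin 2))
    (h1 : RK K x ≤ 2 * ε) (h2 : ∀ j ∉ K, 21 * ε ≤ RK (insert j K) x) :
    ∀ i ∈ K, ∀ j ∉ K, ε ≤ ‖x i - x j‖ ^ 2 := by
  intro i hi j hj
  set S := (K.card : ℝ)⁻¹ • ∑ k ∈ K, x k
  have hnear : ‖x i - S‖ ^ 2 ≤ 2 * ε :=
    (single_le_sum (f := fun k => ‖x k - S‖ ^ 2) (fun _ _ => by positivity) hi).trans h1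
  have hfar : 19 * ε ≤ ‖x j - S‖ ^ 2 := by
    linarith [h2 j hj, RK_insert_le K x hj]
  simpa using le_norm_sub_sq_of_norm_sq_le_of_le_norm_sq hnear hfar

theorem stmt_2 (N : ℕ) (K : Finset (Fin N)) (hK : K.Nonempty) (hKp : K ≠ Finset.univ)
    (ε : ℝ) (hε : 0 < ε) (x : Fin N → EuclideanSpace ℝ (Fin 2))
    (h1 : RK K x ≤ 2 * ε) (h2 : ∀ j ∉ K, 21 * ε ≤ RK (insert j K) x) :
    ∀ i ∈ K, ∀ j ∉ K, ε ≤ ‖x i - x j‖ ^ 2 :=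
  stmt_2_general N K ε x h1 h2
end

section
/- Let δ ∈ ℝ, a ≥ 0 and b > 0 satisfy δ + a√b < 2. Then the integral ∫_0^{1/2} exp( ∫_u^{1/2} (δ + a√(b+v)) / (2v(1−v)) dv ) du is finite. -/
open MeasureTheory

set_option maxHeartbeats 1000000 in
theorem stmt_19 (δ a b : ℝ) (ha : 0 ≤ a) (hb : 0 < b)
    (h : δ + a * Real.sqrt b < 2) :
    ∫⁻ u in Set.Ioc (0 : ℝ) (1 / 2),
        ENNReal.ofReal (Real.exp
          (∫ v in u..(1 / 2 : ℝ), (δ + a * Real.sqrt (b + v)) / (2 * v * (1 - v)))) < ⊤ := by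
  -- Step 1: choose a small ε
  obtain ⟨ε, hε0, hε4, hεlt⟩ : ∃ ε : ℝ, 0 < ε ∧ ε ≤ 1/4 ∧
      δ + a * Real.sqrt (b + ε) + 2*ε < 2 := by
    have hcont : Continuous fun x : ℝ => δ + a * Real.sqrt (b + x) + 2*x := by
      continuity
    have h0 : δ + a * Real.sqrt (b + 0) + 2*0 < 2 := by simpa using h
    have hev : ∀ᶠ x in nhds (0:ℝ), δ + a * Real.sqrt (b + x) + 2*x < 2 :=
      Filter.Tendsto.eventually_lt_const h0 (hcont.continuousAt)
    rw [Metric.eventually_nhds_iff] at hev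
    obtain ⟨r, hr0, hr⟩ := hev
    refine ⟨min (r/2) (1/4), by positivity, min_le_right _ _, hr ?_⟩
    have h1 : min (r/2) (1/4) ≤ r/2 := min_le_left _ _
    have h2 : (0:ℝ) < min (r/2) (1/4) := by positivity
    rw [Real.dist_eq, sub_zero, abs_of_pos h2]
    linarith
  have hε1 : ε < 1 := by linarith
  set c : ℝ := δ + a * Real.sqrt (b + ε) with hc_def
  have h1ε : (0:ℝ) < 1 - ε := by linarith
  set p : ℝ := max (c / (1 - ε)) 0 / 2 with hp_def
  have hp0 : 0 ≤ p := by positivity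
  have hp1 : p < 1 := by
    have h1 : c / (1 - ε) < 2 := by
      rw [div_lt_iff₀ h1ε]; linarith
    have : max (c / (1 - ε)) 0 < 2 := max_lt h1 (by norm_num)
    rw [hp_def]; linarith
  set N : ℝ := |δ| + a * Real.sqrt (b + 1) with hN_def
  have hN0 : 0 ≤ N := by positivity
  set K : ℝ := N / ε with hK_def
  have hK0 : 0 ≤ K := by positivity
  -- Step 2: pointwise bound on the inner integrand
  have hfg : ∀ v : ℝ, 0 < v → v ≤ 1/2 →
      (δ + a * Real.sqrt (b + v)) / (2 * v * (1 - v)) ≤ p * (1/v) + K := by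
    intro v hv0 hv2
    have h1v : (0:ℝ) < 1 - v := by linarith
    have hpv : 0 ≤ p * (1/v) := by positivity
    rcases le_or_gt v ε with hv | hv
    · -- v ≤ ε : use the singular bound p/v
      have hnum : δ + a * Real.sqrt (b + v) ≤ c := by
        have := Real.sqrt_le_sqrt (show b + v ≤ b + ε by linarith)
        nlinarith [mul_le_mul_of_nonneg_left this ha]
      have key : (δ + a * Real.sqrt (b + v)) / (2 * v * (1 - v)) ≤ p * (1/v) := by
        rcases le_or_gt (δ + a * Real.sqrt (b + v)) 0 with hn | hn
        · refine le_trans (div_nonpos_iff.mpr (Or.inr ⟨hn, by nlinarith⟩)) hpv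
        · have hc0 : 0 < c := lt_of_lt_of_le hn hnum
          have hd1 : (0:ℝ) < 2 * v * (1 - ε) := by positivity
          have hd2 : 2 * v * (1 - ε) ≤ 2 * v * (1 - v) := by nlinarith
          have step1 : (δ + a * Real.sqrt (b + v)) / (2 * v * (1 - v)) ≤
              c / (2 * v * (1 - ε)) := div_le_div₀ hc0.le hnum hd1 hd2
          have e1 : c / (2 * v * (1 - ε)) = (c / (1 - ε)) / (2 * v) := by
            rw [div_div]; congr 1; ring
          have hcp : c / (1 - ε) ≤ 2 * p := by
            have := le_max_left (c / (1 - ε)) 0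
            rw [hp_def]; linarith
          have step2 : (c / (1 - ε)) / (2 * v) ≤ (2 * p) / (2 * v) := by gcongr
          have e2 : (2 * p) / (2 * v) = p * (1/v) := by
            rw [mul_one_div, mul_div_mul_left _ _ (two_ne_zero)]
          linarith
      linarith
    · -- ε < v : use the constant bound K
      have hd : ε ≤ 2 * v * (1 - v) := by nlinarith
      have hnum : δ + a * Real.sqrt (b + v) ≤ N := by
        have h1 : Real.sqrt (b + v) ≤ Real.sqrt (b + 1) :=
          Real.sqrt_le_sqrt (by linarith)
        have := mul_le_mul_of_nonneg_left h1 ha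
        have := le_abs_self δ
        rw [hN_def]; linarith
      have : (δ + a * Real.sqrt (b + v)) / (2 * v * (1 - v)) ≤ N / ε :=
        div_le_div₀ hN0 hnum hε0 hd
      rw [hK_def] at *
      linarith
  -- Step 3: bound the inner integral
  have hI : ∀ u : ℝ, 0 < u → u ≤ 1/2 →
      (∫ v in u..(1/2 : ℝ), (δ + a * Real.sqrt (b + v)) / (2 * v * (1 - v)))
        ≤ p * Real.log ((1/2)/u) + K/2 := by
    intro u hu0 hu2
    have hsub : Set.uIcc u (1/2 : ℝ) = Set.Icc u (1/2) := Set.uIcc_of_le hu2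
    have hpos : ∀ x ∈ Set.Icc u (1/2 : ℝ), 0 < x := fun x hx => lt_of_lt_of_le hu0 hx.1
    have hfc : ContinuousOn
        (fun v => (δ + a * Real.sqrt (b + v)) / (2 * v * (1 - v))) (Set.Icc u (1/2)) := by
      apply ContinuousOn.div
      · fun_prop
      · fun_prop
      · intro x hx
        have h1 := hpos x hx
        have h2 := hx.2
        nlinarith
    have hgc : ContinuousOn (fun v : ℝ => p * (1/v) + K) (Set.Icc u (1/2)) := by
      apply ContinuousOn.add _ continuousOn_const
      apply ContinuousOn.mul continuousOn_const
      apply ContinuousOn.div continuousOn_const continuousOn_id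
      intro x hx; exact (hpos x hx).ne'
    have hfi : IntervalIntegrable
        (fun v => (δ + a * Real.sqrt (b + v)) / (2 * v * (1 - v))) volume u (1/2) := by
      apply ContinuousOn.intervalIntegrable; rwa [hsub]
    have hgi : IntervalIntegrable (fun v : ℝ => p * (1/v) + K) volume u (1/2) := by
      apply ContinuousOn.intervalIntegrable; rwa [hsub]
    have hmono := intervalIntegral.integral_mono_on hu2 hfi hgi
      (fun x hx => hfg x (hpos x hx) hx.2)
    have hone : IntervalIntegrable (fun v : ℝ => p * (1/v)) volume u (1/2) := by
      apply ContinuousOn.intervalIntegrable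
      rw [hsub]
      apply ContinuousOn.mul continuousOn_const
      apply ContinuousOn.div continuousOn_const continuousOn_id
      intro x hx; exact (hpos x hx).ne'
    have hzero : (0:ℝ) ∉ Set.uIcc u (1/2 : ℝ) := by
      rw [hsub]; intro hmem; exact absurd (hpos 0 hmem) (lt_irrefl 0)
    have hcalc : (∫ v in u..(1/2 : ℝ), (p * (1/v) + K))
        = p * Real.log ((1/2)/u) + (1/2 - u) * K := by
      rw [intervalIntegral.integral_add hone intervalIntegrable_const,
        intervalIntegral.integral_const_mul, integral_one_div hzero,
        intervalIntegral.integral_const, smul_eq_mul]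
    rw [hcalc] at hmono
    have : (1/2 - u) * K ≤ K/2 := by nlinarith
    linarith
  -- Step 4: compare with an integrable majorant
  have hmaj : ∀ u ∈ Set.Ioc (0:ℝ) (1/2),
      ENNReal.ofReal (Real.exp
        (∫ v in u..(1/2 : ℝ), (δ + a * Real.sqrt (b + v)) / (2 * v * (1 - v))))
      ≤ ENNReal.ofReal (Real.exp (K/2) * Real.exp (Real.log ((1/2)/u) * p)) := by
    intro u hu
    apply ENNReal.ofReal_le_ofReal
    have h1 : Real.exp (∫ v in u..(1/2 : ℝ),
        (δ + a * Real.sqrt (b + v)) / (2 * v * (1 - v)))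
        ≤ Real.exp (p * Real.log ((1/2)/u) + K/2) :=
      Real.exp_le_exp.mpr (hI u hu.1 hu.2)
    rw [Real.exp_add] at h1
    rw [mul_comm (Real.log ((1/2)/u)) p]
    linarith [h1, mul_comm (Real.exp (p * Real.log ((1/2)/u))) (Real.exp (K/2))]
  -- Step 5: the majorant is integrable
  have hint : IntegrableOn (fun u : ℝ => Real.exp (K/2) * Real.exp (Real.log ((1/2)/u) * p))
      (Set.Ioc (0:ℝ) (1/2)) := by
    rw [integrableOn_Ioc_iff_integrableOn_Ioo]
    have h1 : IntegrableOn (fun u : ℝ => u ^ (-p)) (Set.Ioo (0:ℝ) (1/2)) :=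
      (intervalIntegral.integrableOn_Ioo_rpow_iff (by norm_num)).mpr (by linarith)
    have h2 : IntegrableOn (fun u : ℝ => Real.exp (K/2) * (1/2 : ℝ) ^ p * u ^ (-p))
        (Set.Ioo (0:ℝ) (1/2)) := h1.const_mul (Real.exp (K/2) * (1/2 : ℝ) ^ p)
    apply h2.congr_fun _ measurableSet_Ioo
    intro u hu
    have hu0 : (0:ℝ) < u := hu.1
    have hx : (0:ℝ) < (1/2)/u := by positivity
    simp only
    rw [← Real.rpow_def_of_pos hx, Real.div_rpow (by norm_num) hu0.le,
      Real.rpow_neg hu0.le]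
    field_simp
  -- Conclusion
  calc ∫⁻ u in Set.Ioc (0 : ℝ) (1 / 2),
        ENNReal.ofReal (Real.exp
          (∫ v in u..(1 / 2 : ℝ), (δ + a * Real.sqrt (b + v)) / (2 * v * (1 - v))))
      ≤ ∫⁻ u in Set.Ioc (0 : ℝ) (1 / 2),
          ENNReal.ofReal (Real.exp (K/2) * Real.exp (Real.log ((1/2)/u) * p)) := by
        apply setLIntegral_mono _ hmaj
        exact (measurable_const.mul (Real.measurable_exp.comp
          ((Real.measurable_log.comp (measurable_const.div measurable_id)).mul_const p))).ennreal_ofReal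
    _ < ⊤ := hint.lintegral_lt_top
end
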